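/- Central cluster: let s = (a_1, …, a_l) be an ordered string with k = max{a_1, …, a_l}, let r ≥ 0 and n = (2k + 1) + r. Then the set of vertices of O_n(s) whose degree equals the maximum possible degree 2 Σ_{t=1}^{l} a_t is exactly {k+1, k+2, …, k+1+r}; in particular, O_{(2k+1)+r}(s) has exactly r + 1 vertices of degree 2 Σ_{t=1}^{l} a_t. -/

import Mathlib

lemma cardFstEven (n i a : ℕ) (hi : 1 ≤ i) (hin : i ≤ n) :
    ((Finset.Icc 1 n ×ˢ Finset.Icc 1 n).filter
      (fun p => (p.1 < p.2 ∧ p.2 ≤ p.1 + a) ∧ p.1 = i)).card = min a (n - i) := by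
  have h1 : ((Finset.Icc 1 n ×ˢ Finset.Icc 1 n).filter
      (fun p => (p.1 < p.2 ∧ p.2 ≤ p.1 + a) ∧ p.1 = i)) =
      ((Finset.Icc 1 n).filter (fun x => x = i)) ×ˢ
        ((Finset.Icc 1 n).filter (fun y => i < y ∧ y ≤ i + a)) := by
    rw [← Finset.filter_product]
    apply Finset.filter_congr
    rintro ⟨x, y⟩ _
    constructor
    · rintro ⟨⟨h1, h2⟩, rfl⟩; exact ⟨rfl, h1, h2⟩
    · rintro ⟨rfl, h1, h2⟩; exact ⟨⟨h1, h2⟩, rfl⟩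
  have h2 : (Finset.Icc 1 n).filter (fun x => x = i) = {i} := by
    ext x; simp [Finset.mem_Icc]; omega
  have h3 : (Finset.Icc 1 n).filter (fun y => i < y ∧ y ≤ i + a)
      = Finset.Icc (i+1) (min (i+a) n) := by
    ext y; simp [Finset.mem_Icc]; omega
  rw [h1, Finset.card_product, h2, h3, Finset.card_singleton, Nat.card_Icc]
  omega

lemma cardSndEven (n i a : ℕ) (hi : 1 ≤ i) (hin : i ≤ n) :
    ((Finset.Icc 1 n ×ˢ Finset.Icc 1 n).filter
      (fun p => (p.1 < p.2 ∧ p.2 ≤ p.1 + a) ∧ p.2 = i)).card = min a (i - 1) := by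
  have h1 : ((Finset.Icc 1 n ×ˢ Finset.Icc 1 n).filter
      (fun p => (p.1 < p.2 ∧ p.2 ≤ p.1 + a) ∧ p.2 = i)) =
      ((Finset.Icc 1 n).filter (fun x => x < i ∧ i ≤ x + a)) ×ˢ
        ((Finset.Icc 1 n).filter (fun y => y = i)) := by
    rw [← Finset.filter_product]
    apply Finset.filter_congr
    rintro ⟨x, y⟩ _
    constructor
    · rintro ⟨⟨h1, h2⟩, rfl⟩; exact ⟨⟨h1, h2⟩, rfl⟩
    · rintro ⟨⟨h1, h2⟩, rfl⟩; exact ⟨⟨h1, h2⟩, rfl⟩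
  have h2 : (Finset.Icc 1 n).filter (fun y => y = i) = {i} := by
    ext x; simp [Finset.mem_Icc]; omega
  have h3 : (Finset.Icc 1 n).filter (fun x => x < i ∧ i ≤ x + a)
      = Finset.Icc (max 1 (i - a)) (i - 1) := by
    ext x; simp [Finset.mem_Icc]; omega
  rw [h1, Finset.card_product, h2, h3, Finset.card_singleton, Nat.card_Icc]
  omega

lemma cardFstOdd (n i a : ℕ) (hi : 1 ≤ i) (hin : i ≤ n) :
    ((Finset.Icc 1 n ×ˢ Finset.Icc 1 n).filter
      (fun p => (p.2 < p.1 ∧ p.1 ≤ p.2 + a) ∧ p.1 = i)).card = min a (i - 1) := by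
  have h1 : ((Finset.Icc 1 n ×ˢ Finset.Icc 1 n).filter
      (fun p => (p.2 < p.1 ∧ p.1 ≤ p.2 + a) ∧ p.1 = i)) =
      ((Finset.Icc 1 n).filter (fun x => x = i)) ×ˢ
        ((Finset.Icc 1 n).filter (fun y => y < i ∧ i ≤ y + a)) := by
    rw [← Finset.filter_product]
    apply Finset.filter_congr
    rintro ⟨x, y⟩ _
    constructor
    · rintro ⟨⟨h1, h2⟩, rfl⟩; exact ⟨rfl, h1, h2⟩
    · rintro ⟨rfl, h1, h2⟩; exact ⟨⟨h1, h2⟩, rfl⟩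
  have h2 : (Finset.Icc 1 n).filter (fun x => x = i) = {i} := by
    ext x; simp [Finset.mem_Icc]; omega
  have h3 : (Finset.Icc 1 n).filter (fun y => y < i ∧ i ≤ y + a)
      = Finset.Icc (max 1 (i - a)) (i - 1) := by
    ext x; simp [Finset.mem_Icc]; omega
  rw [h1, Finset.card_product, h2, h3, Finset.card_singleton, Nat.card_Icc]
  omega

lemma cardSndOdd (n i a : ℕ) (hi : 1 ≤ i) (hin : i ≤ n) :
    ((Finset.Icc 1 n ×ˢ Finset.Icc 1 n).filter
      (fun p => (p.2 < p.1 ∧ p.1 ≤ p.2 + a) ∧ p.2 = i)).card = min a (n - i) := by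
  have h1 : ((Finset.Icc 1 n ×ˢ Finset.Icc 1 n).filter
      (fun p => (p.2 < p.1 ∧ p.1 ≤ p.2 + a) ∧ p.2 = i)) =
      ((Finset.Icc 1 n).filter (fun x => i < x ∧ x ≤ i + a)) ×ˢ
        ((Finset.Icc 1 n).filter (fun y => y = i)) := by
    rw [← Finset.filter_product]
    apply Finset.filter_congr
    rintro ⟨x, y⟩ _
    constructor
    · rintro ⟨⟨h1, h2⟩, rfl⟩; exact ⟨⟨h1, h2⟩, rfl⟩
    · rintro ⟨⟨h1, h2⟩, rfl⟩; exact ⟨⟨h1, h2⟩, rfl⟩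
  have h2 : (Finset.Icc 1 n).filter (fun y => y = i) = {i} := by
    ext x; simp [Finset.mem_Icc]; omega
  have h3 : (Finset.Icc 1 n).filter (fun x => i < x ∧ x ≤ i + a)
      = Finset.Icc (i+1) (min (i+a) n) := by
    ext x; simp [Finset.mem_Icc]; omega
  rw [h1, Finset.card_product, h2, h3, Finset.card_singleton, Nat.card_Icc]
  omega

lemma card_filter_listsum {α : Type*} (p : α → Prop) [DecidablePred p]
    (L : List (Multiset α)) :
    Multiset.card (Multiset.filter p L.sum)
      = (L.map (fun m => Multiset.card (Multiset.filter p m))).sum := by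
  induction L with
  | nil => simp
  | cons a L ih => simp [Multiset.filter_add, ih]

lemma list_range_sum (f : ℕ → ℕ) (n : ℕ) :
    ((List.range n).map f).sum = ∑ t ∈ Finset.range n, f t := by
  induction n with
  | zero => simp
  | succ n ih => simp [List.range_succ, Finset.sum_range_succ, ih]

lemma sum_range_getD (f : ℕ → ℕ) (s : List ℕ) :
    ∑ t ∈ Finset.range s.length, f (s.getD t 0) = (s.map f).sum := by
  induction s with
  | nil => simp
  | cons a s ih =>
    simp only [List.length_cons, Finset.sum_range_succ', List.getD_cons_succ,
      List.getD_cons_zero, List.map_cons, List.sum_cons, ih]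
    ring

lemma sum_map_eq_iff (s : List ℕ) (f g : ℕ → ℕ) (h : ∀ a ∈ s, f a ≤ g a) :
    (s.map f).sum = (s.map g).sum ↔ ∀ a ∈ s, f a = g a := by
  induction s with
  | nil => simp
  | cons a s ih =>
    have ht : ∀ x ∈ s, f x ≤ g x := fun x hx => h x (List.mem_cons_of_mem _ hx)
    have hfa := h a List.mem_cons_self
    have hle : (s.map f).sum ≤ (s.map g).sum := List.sum_le_sum ht
    simp only [List.map_cons, List.sum_cons, List.forall_mem_cons]
    constructor
    · intro heq
      have h1 : f a = g a ∧ (s.map f).sum = (s.map g).sum := by omega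
      exact ⟨h1.1, (ih ht).1 h1.2⟩
    · rintro ⟨h1, h2⟩
      rw [h1, (ih ht).2 h2]

/-- Arc multiset of the ornated graph `O_n(s)` on vertex set `{1, …, n}`:
for each entry of the ordered string `s` at 1-based odd index `t` (0-based even
position `t-1`) with value `a`, one arc `(i, j)` for every `1 ≤ i < j ≤ n` with
`j ≤ i + a`; for each entry at 1-based even index (0-based odd position) with
value `a`, one arc `(i, j)` for every `n ≥ i > j ≥ 1` with `i ≤ j + a`.
Arcs arising from different entries are counted with multiplicity. -/
def ornArcs (s : List ℕ) (n : ℕ) : Multiset (ℕ × ℕ) :=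
  ((List.range s.length).map (fun t =>
    ((Finset.Icc 1 n ×ˢ Finset.Icc 1 n).filter (fun p =>
      (t % 2 = 0 ∧ p.1 < p.2 ∧ p.2 ≤ p.1 + s.getD t 0) ∨
      (t % 2 = 1 ∧ p.2 < p.1 ∧ p.1 ≤ p.2 + s.getD t 0))).val)).sum

/-- Degree of vertex `i` in the underlying multigraph of `O_n(s)`:
the number of arcs incident with `i`, counted with multiplicity. -/
def ornDeg (s : List ℕ) (n i : ℕ) : ℕ :=
  Multiset.card ((ornArcs s n).filter (fun p => p.1 = i)) +
  Multiset.card ((ornArcs s n).filter (fun p => p.2 = i))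

lemma ornDeg_eq (s : List ℕ) (n i : ℕ) (hi : 1 ≤ i) (hin : i ≤ n) :
    ornDeg s n i = (s.map (fun a => min a (n - i) + min a (i - 1))).sum := by
  unfold ornDeg ornArcs
  rw [card_filter_listsum, card_filter_listsum, List.map_map, List.map_map,
      list_range_sum, list_range_sum, ← Finset.sum_add_distrib, ← sum_range_getD]
  apply Finset.sum_congr rfl
  intro t _
  have hc : ∀ (S : Finset (ℕ × ℕ)) (p : ℕ × ℕ → Prop) [DecidablePred p],
      Multiset.card (Multiset.filter p S.val) = (S.filter p).card := fun S p _ => rfl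
  simp only [Function.comp_apply, hc, Finset.filter_filter]
  rcases Nat.mod_two_eq_zero_or_one t with h | h
  · have e1 : ((Finset.Icc 1 n ×ˢ Finset.Icc 1 n).filter (fun p =>
        ((t % 2 = 0 ∧ p.1 < p.2 ∧ p.2 ≤ p.1 + s.getD t 0) ∨
         (t % 2 = 1 ∧ p.2 < p.1 ∧ p.1 ≤ p.2 + s.getD t 0)) ∧ p.1 = i)) =
        ((Finset.Icc 1 n ×ˢ Finset.Icc 1 n).filter (fun p =>
          (p.1 < p.2 ∧ p.2 ≤ p.1 + s.getD t 0) ∧ p.1 = i)) := by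
      apply Finset.filter_congr; intro p _; simp [h]
    have e2 : ((Finset.Icc 1 n ×ˢ Finset.Icc 1 n).filter (fun p =>
        ((t % 2 = 0 ∧ p.1 < p.2 ∧ p.2 ≤ p.1 + s.getD t 0) ∨
         (t % 2 = 1 ∧ p.2 < p.1 ∧ p.1 ≤ p.2 + s.getD t 0)) ∧ p.2 = i)) =
        ((Finset.Icc 1 n ×ˢ Finset.Icc 1 n).filter (fun p =>
          (p.1 < p.2 ∧ p.2 ≤ p.1 + s.getD t 0) ∧ p.2 = i)) := by
      apply Finset.filter_congr; intro p _; simp [h]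
    rw [e1, e2, cardFstEven n i _ hi hin, cardSndEven n i _ hi hin]
  · have e1 : ((Finset.Icc 1 n ×ˢ Finset.Icc 1 n).filter (fun p =>
        ((t % 2 = 0 ∧ p.1 < p.2 ∧ p.2 ≤ p.1 + s.getD t 0) ∨
         (t % 2 = 1 ∧ p.2 < p.1 ∧ p.1 ≤ p.2 + s.getD t 0)) ∧ p.1 = i)) =
        ((Finset.Icc 1 n ×ˢ Finset.Icc 1 n).filter (fun p =>
          (p.2 < p.1 ∧ p.1 ≤ p.2 + s.getD t 0) ∧ p.1 = i)) := by
      apply Finset.filter_congr; intro p _; simp [h]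
    have e2 : ((Finset.Icc 1 n ×ˢ Finset.Icc 1 n).filter (fun p =>
        ((t % 2 = 0 ∧ p.1 < p.2 ∧ p.2 ≤ p.1 + s.getD t 0) ∨
         (t % 2 = 1 ∧ p.2 < p.1 ∧ p.1 ≤ p.2 + s.getD t 0)) ∧ p.2 = i)) =
        ((Finset.Icc 1 n ×ˢ Finset.Icc 1 n).filter (fun p =>
          (p.2 < p.1 ∧ p.1 ≤ p.2 + s.getD t 0) ∧ p.2 = i)) := by
      apply Finset.filter_congr; intro p _; simp [h]
    rw [e1, e2, cardFstOdd n i _ hi hin, cardSndOdd n i _ hi hin]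
    omega

lemma two_mul_sum (s : List ℕ) : (s.map (fun a => 2 * a)).sum = 2 * s.sum := by
  induction s with
  | nil => simp
  | cons a s ih => simp [ih]; ring

/-- Central cluster: in `O_{(2k+1)+r}(s)` (with `k` the maximum entry of `s`), the
vertices of maximum possible degree `2 Σ_t a_t` are exactly `{k+1, …, k+1+r}`; in
particular there are exactly `r + 1` of them. -/
theorem ornated_central_cluster (s : List ℕ) (k : ℕ) (hk : k ∈ s) (hmax : ∀ a ∈ s, a ≤ k)
    (r : ℕ) :
    (∀ i, 1 ≤ i → i ≤ 2 * k + 1 + r →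
      (ornDeg s (2 * k + 1 + r) i = 2 * s.sum ↔ k + 1 ≤ i ∧ i ≤ k + 1 + r)) ∧
    ((Finset.Icc 1 (2 * k + 1 + r)).filter
        (fun i => ornDeg s (2 * k + 1 + r) i = 2 * s.sum)).card = r + 1 := by
  have hdeg : ∀ i, 1 ≤ i → i ≤ 2 * k + 1 + r →
      (ornDeg s (2 * k + 1 + r) i = 2 * s.sum ↔ k + 1 ≤ i ∧ i ≤ k + 1 + r) := by
    intro i h1 h2
    rw [ornDeg_eq s (2 * k + 1 + r) i h1 h2, ← two_mul_sum,
      sum_map_eq_iff _ _ _ (by intro a _; omega)]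
    constructor
    · intro hall
      have := hall k hk
      omega
    · rintro ⟨ha, hb⟩ a hmem
      have := hmax a hmem
      omega
  refine ⟨hdeg, ?_⟩
  have hset : (Finset.Icc 1 (2 * k + 1 + r)).filter
      (fun i => ornDeg s (2 * k + 1 + r) i = 2 * s.sum) = Finset.Icc (k + 1) (k + 1 + r) := by
    ext i
    simp only [Finset.mem_filter, Finset.mem_Icc]
    constructor
    · rintro ⟨⟨ha, hb⟩, hc⟩
      exact (hdeg i ha hb).1 hc
    · rintro ⟨ha, hb⟩
      exact ⟨⟨by omega, by omega⟩, (hdeg i (by omega) (by omega)).2 ⟨ha, hb⟩⟩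
  rw [hset, Nat.card_Icc]
  omega
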